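/- arXiv:1109.6335 — 4 statements merged into one kernel-verified Lean document; each statement's English description precedes it below -/
import Mathlib

section
/- Let a > 0 and b ≠ 0 be real numbers. Then the function x ↦ x^(−ib) / ((x + a)(x + a + 1)) is (absolutely) integrable on (0, ∞), and ∫₀^∞ x^(−ib) / ((x + a)(x + a + 1)) dx = (π / (i·sinh(πb))) · (a^(−ib) − (a+1)^(−ib)), where a^(−ib) and (a+1)^(−ib) are complex powers of positive reals and sinh is the real hyperbolic sine. -/
open Filter Set MeasureTheory Real
open scoped Interval

/-!
Writing `1 / ((x + a) * (x + a + 1)) = ∫ c in a..a+1, 1 / (x + c) ^ 2` and exchanging the order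
of integration, the substitution `x = c * t` turns the inner integral into
`c ^ (s - 1) * ∫ t in Ioi 0, t ^ s / (1 + t) ^ 2`, and `t ↦ t / (1 + t)` identifies the last
integral with `B(1 + s, 1 - s) = Γ(1 + s) Γ(1 - s)`. Integrating `c ^ (s - 1)` over `[a, a + 1]`
and using `Γ(1 + s) = s Γ(s)` and the reflection formula yields
`π / sin (π s) * ((a + 1) ^ s - a ^ s)` for `-1 < re s < 1`, `s ≠ 0`; at `s = -i b` one has
`sin (π s) = -i sinh (π b)`.
-/

lemma hasDerivAt_div_one_add {t : ℝ} (ht : 1 + t ≠ 0) :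
    HasDerivAt (fun t : ℝ => t / (1 + t)) ((1 + t) ^ 2)⁻¹ t :=
  ((hasDerivAt_id' t).fun_div ((hasDerivAt_id' t).const_add 1) ht).congr_deriv (by ring)

lemma injOn_div_one_add : InjOn (fun t : ℝ => t / (1 + t)) (Ioi 0) := by
  intro x hx y hy h
  have : 1 + x ≠ 0 := by grind
  have : 1 + y ≠ 0 := by grind
  field_simp at h
  linarith

lemma image_div_one_add_Ioi : (fun t : ℝ => t / (1 + t)) '' Ioi 0 = Ioo 0 1 := by
  ext x
  constructor
  · rintro ⟨t, ht : 0 < t, rfl⟩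
    exact ⟨by positivity, (div_lt_one (by linarith)).2 (by linarith)⟩
  · rintro ⟨hx₀, hx₁⟩
    refine ⟨x / (1 - x), div_pos hx₀ (by linarith), ?_⟩
    have : 1 - x ≠ 0 := by linarith
    field_simp
    ring

lemma abs_deriv_smul_betaIntegrand_div_one_add {t : ℝ} (ht : 0 < t) (u v : ℂ) :
    |((1 + t) ^ 2)⁻¹| •
        (((t / (1 + t) : ℝ) : ℂ) ^ (u - 1) * (1 - ((t / (1 + t) : ℝ) : ℂ)) ^ (v - 1))
      = (t : ℂ) ^ (u - 1) / (1 + (t : ℂ)) ^ (u + v) := by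
  have h₁ : (0 : ℝ) < 1 + t := by linarith
  have hC : ((1 + t : ℝ) : ℂ) ≠ 0 := by exact_mod_cast h₁.ne'
  have hsub : 1 - (t : ℂ) / ((1 + t : ℝ) : ℂ) = (((1 + t : ℝ) : ℂ))⁻¹ := by
    field_simp; push_cast; ring
  have hpow : (1 + (t : ℂ)) ^ (u + v)
      = ((1 + t : ℝ) : ℂ) ^ 2 * ((1 + t : ℝ) : ℂ) ^ (u - 1) * ((1 + t : ℝ) : ℂ) ^ (v - 1) := by
    rw [← Complex.cpow_two, ← Complex.cpow_add _ _ hC, ← Complex.cpow_add _ _ hC]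
    push_cast
    ring_nf
  rw [abs_of_pos (by positivity), Complex.ofReal_div, hsub,
    Complex.div_cpow_ofReal_nonneg ht.le h₁.le, Complex.inv_cpow_ofReal_nonneg h₁.le, hpow,
    Complex.real_smul]
  push_cast
  field_simp

lemma integrableOn_cpow_div_one_add_cpow {u v : ℂ} (hu : 0 < u.re) (hv : 0 < v.re) :
    IntegrableOn (fun t : ℝ => (t : ℂ) ^ (u - 1) / (1 + (t : ℂ)) ^ (u + v)) (Ioi 0) := by
  have hB := Complex.betaIntegral_convergent hu hv
  rw [intervalIntegrable_iff_integrableOn_Ioo_of_le zero_le_one, ← image_div_one_add_Ioi,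
    integrableOn_image_iff_integrableOn_abs_deriv_smul measurableSet_Ioi
      (fun t ht => (hasDerivAt_div_one_add (by linarith [mem_Ioi.1 ht])).hasDerivWithinAt)
      injOn_div_one_add] at hB
  exact hB.congr_fun (fun t ht => abs_deriv_smul_betaIntegrand_div_one_add ht u v)
    measurableSet_Ioi

lemma integral_cpow_div_one_add_cpow {u v : ℂ} :
    ∫ t in Ioi (0 : ℝ), (t : ℂ) ^ (u - 1) / (1 + (t : ℂ)) ^ (u + v)
      = Complex.betaIntegral u v := by
  rw [Complex.betaIntegral, intervalIntegral.integral_of_le zero_le_one,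
    integral_Ioc_eq_integral_Ioo, ← image_div_one_add_Ioi,
    integral_image_eq_integral_abs_deriv_smul measurableSet_Ioi
      (fun t ht => (hasDerivAt_div_one_add (by linarith [mem_Ioi.1 ht])).hasDerivWithinAt)
      injOn_div_one_add]
  exact (setIntegral_congr_fun measurableSet_Ioi
    (fun t ht => abs_deriv_smul_betaIntegrand_div_one_add ht u v)).symm

lemma cpow_div_one_add_sq_eq_cpow_sub_one_div (s : ℂ) :
    (fun t : ℝ => (t : ℂ) ^ s / (1 + (t : ℂ)) ^ 2)
      = fun t : ℝ => (t : ℂ) ^ ((1 + s) - 1) / (1 + (t : ℂ)) ^ ((1 + s) + (1 - s)) := by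
  funext t
  rw [add_sub_cancel_left, add_add_sub_cancel, one_add_one_eq_two, Complex.cpow_two]

lemma integrableOn_cpow_div_one_add_sq {s : ℂ} (h₁ : -1 < s.re) (h₂ : s.re < 1) :
    IntegrableOn (fun t : ℝ => (t : ℂ) ^ s / (1 + (t : ℂ)) ^ 2) (Ioi 0) := by
  rw [cpow_div_one_add_sq_eq_cpow_sub_one_div]
  exact integrableOn_cpow_div_one_add_cpow (by simp; linarith) (by simp; linarith)

lemma integral_cpow_div_one_add_sq {s : ℂ} (h₁ : -1 < s.re) (h₂ : s.re < 1) :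
    ∫ t in Ioi (0 : ℝ), (t : ℂ) ^ s / (1 + (t : ℂ)) ^ 2
      = Complex.Gamma (1 + s) * Complex.Gamma (1 - s) := by
  rw [cpow_div_one_add_sq_eq_cpow_sub_one_div, integral_cpow_div_one_add_cpow,
    Complex.Gamma_mul_Gamma_eq_betaIntegral (by simp; linarith) (by simp; linarith),
    add_add_sub_cancel, one_add_one_eq_two]
  simp

lemma cpow_mul_div_mul_add_sq {c x : ℝ} (hc : 0 < c) (hx : 0 ≤ x) (s : ℂ) :
    ((c * x : ℝ) : ℂ) ^ s / (((c * x : ℝ) : ℂ) + c) ^ 2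
      = (c : ℂ) ^ s / (c : ℂ) ^ 2 * ((x : ℂ) ^ s / (1 + (x : ℂ)) ^ 2) := by
  rw [Complex.ofReal_mul, Complex.mul_cpow_ofReal_nonneg hc.le hx,
    show (c : ℂ) * x + c = c * (1 + x) by ring, mul_pow, mul_div_mul_comm]

lemma integrableOn_cpow_div_add_sq {c : ℝ} (hc : 0 < c) {s : ℂ} (h₁ : -1 < s.re)
    (h₂ : s.re < 1) : IntegrableOn (fun x : ℝ => (x : ℂ) ^ s / ((x : ℂ) + c) ^ 2) (Ioi 0) := by
  have h := IntegrableOn.congr_fun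
    ((integrableOn_cpow_div_one_add_sq h₁ h₂).const_mul ((c : ℂ) ^ s / (c : ℂ) ^ 2))
    (fun x hx => (cpow_mul_div_mul_add_sq hc (le_of_lt hx) s).symm) measurableSet_Ioi
  simpa using (integrableOn_Ioi_comp_mul_left_iff
    (fun x : ℝ => (x : ℂ) ^ s / ((x : ℂ) + c) ^ 2) 0 hc).1 h

lemma integral_cpow_div_add_sq {c : ℝ} (hc : 0 < c) (s : ℂ) :
    ∫ x in Ioi (0 : ℝ), (x : ℂ) ^ s / ((x : ℂ) + c) ^ 2
      = (c : ℂ) ^ (s - 1) * ∫ t in Ioi (0 : ℝ), (t : ℂ) ^ s / (1 + (t : ℂ)) ^ 2 := by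
  have hc' : (c : ℂ) ≠ 0 := by exact_mod_cast hc.ne'
  have h := integral_comp_mul_left_Ioi' (fun x : ℝ => (x : ℂ) ^ s / ((x : ℂ) + c) ^ 2) 0 hc
  rw [mul_zero] at h
  rw [← h,
    setIntegral_congr_fun measurableSet_Ioi
      (fun x hx => cpow_mul_div_mul_add_sq hc (le_of_lt hx) s),
    integral_const_mul, Complex.real_smul, ← mul_assoc, Complex.cpow_sub _ _ hc',
    Complex.cpow_one]
  field_simp

lemma norm_ofReal_add {x c : ℝ} (h : 0 ≤ x + c) : ‖(x : ℂ) + c‖ = x + c := by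
  rw [← Complex.ofReal_add, Complex.norm_of_nonneg h]

lemma norm_cpow_div_add_sq_le_of_le {x c c' : ℝ} (hx : 0 < x) (hc : 0 < c) (hcc' : c ≤ c')
    (s : ℂ) :
    ‖(x : ℂ) ^ s / ((x : ℂ) + c') ^ 2‖ ≤ ‖(x : ℂ) ^ s / ((x : ℂ) + c) ^ 2‖ := by
  rw [norm_div, norm_div, norm_pow, norm_pow, norm_ofReal_add (by linarith),
    norm_ofReal_add (by linarith)]
  gcongr

lemma integrable_cpow_div_add_sq_prod {a b : ℝ} (ha : 0 < a) {s : ℂ} (h₁ : -1 < s.re)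
    (h₂ : s.re < 1) :
    Integrable (fun p : ℝ × ℝ => (p.1 : ℂ) ^ s / ((p.1 : ℂ) + p.2) ^ 2)
      ((volume.restrict (Ioi 0)).prod (volume.restrict (Ioc a b))) := by
  have hbound := ((integrableOn_cpow_div_add_sq ha h₁ h₂).norm).mul_prod
    (integrable_const (1 : ℝ) : Integrable (fun _ : ℝ => (1 : ℝ)) (volume.restrict (Ioc a b)))
  refine hbound.mono' (by fun_prop : Measurable _).aestronglyMeasurable ?_
  rw [Measure.prod_restrict, ae_restrict_iff' (measurableSet_Ioi.prod measurableSet_Ioc)]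
  refine ae_of_all _ fun p ⟨hp₁, hp₂⟩ => ?_
  rw [mul_one]
  exact norm_cpow_div_add_sq_le_of_le hp₁ ha hp₂.1.le s

lemma integral_Ioc_inv_add_sq {x a b : ℝ} (hxa : 0 < x + a) (hab : a ≤ b) :
    ∫ c in Ioc a b, ((x + c) ^ 2)⁻¹ = (x + a)⁻¹ - (x + b)⁻¹ := by
  have hpos : ∀ c ∈ [[a, b]], x + c ≠ 0 := fun c hc => by
    rw [uIcc_of_le hab] at hc
    linarith [hc.1]
  have hderiv : ∀ c ∈ [[a, b]], HasDerivAt (fun c => -(x + c)⁻¹) ((x + c) ^ 2)⁻¹ c :=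
    fun c hc => (((hasDerivAt_id' c).const_add x).inv (hpos c hc)).neg.congr_deriv (by ring)
  have hint : IntervalIntegrable (fun c => ((x + c) ^ 2)⁻¹) volume a b :=
    (ContinuousOn.inv₀ (by fun_prop) fun c hc => pow_ne_zero 2 (hpos c hc)).intervalIntegrable
  rw [← intervalIntegral.integral_of_le hab,
    intervalIntegral.integral_eq_sub_of_hasDerivAt hderiv hint]
  ring

lemma integral_Ioc_cpow_div_add_sq {x a : ℝ} (hx : 0 < x) (ha : 0 < a) (s : ℂ) :
    ∫ c in Ioc a (a + 1), (x : ℂ) ^ s / ((x : ℂ) + c) ^ 2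
      = (x : ℂ) ^ s / ((x + a) * (x + a + 1)) := by
  have hxa : (x : ℂ) + a ≠ 0 := by exact_mod_cast (by linarith : x + a ≠ 0)
  have hxa₁ : (x : ℂ) + a + 1 ≠ 0 := by exact_mod_cast (by linarith : x + a + 1 ≠ 0)
  have hcast : ∀ c : ℝ, (((x : ℂ) + c) ^ 2)⁻¹ = (((x + c) ^ 2)⁻¹ : ℝ) := fun c => by push_cast; rfl
  simp_rw [div_eq_mul_inv (_ : ℂ), hcast]
  rw [integral_const_mul, integral_complex_ofReal,
    integral_Ioc_inv_add_sq (by linarith) (by linarith)]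
  push_cast
  rw [← add_assoc]
  field_simp
  ring

lemma integrableOn_cpow_div_add_mul_add_one {a : ℝ} (ha : 0 < a) {s : ℂ} (h₁ : -1 < s.re)
    (h₂ : s.re < 1) :
    IntegrableOn (fun x : ℝ => (x : ℂ) ^ s / ((x + a) * (x + a + 1))) (Ioi 0) := by
  refine (integrableOn_cpow_div_add_sq ha h₁ h₂).norm.mono'
    (by fun_prop : Measurable _).aestronglyMeasurable ?_
  rw [ae_restrict_iff' measurableSet_Ioi]
  refine ae_of_all _ fun x (hx : 0 < x) => ?_
  rw [norm_div, norm_div, norm_pow, norm_mul, norm_ofReal_add (by linarith),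
    show (x : ℂ) + a + 1 = x + (a + 1 : ℝ) by push_cast; ring, norm_ofReal_add (by linarith), sq]
  gcongr
  linarith

theorem integral_cpow_div_add_mul_add_one {a : ℝ} (ha : 0 < a) {s : ℂ} (hs : s ≠ 0)
    (h₁ : -1 < s.re) (h₂ : s.re < 1) :
    ∫ x in Ioi (0 : ℝ), (x : ℂ) ^ s / ((x + a) * (x + a + 1))
      = π / Complex.sin (π * s) * ((a + 1) ^ s - a ^ s) := by
  have hs₁ : s - 1 ≠ -1 := by simpa [sub_eq_neg_self] using hs
  have ha₀ : (0 : ℝ) ∉ [[a, a + 1]] := by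
    rw [uIcc_of_le (by linarith)]
    exact fun h => (h.1.trans_lt' ha).false
  calc ∫ x in Ioi (0 : ℝ), (x : ℂ) ^ s / ((x + a) * (x + a + 1))
      = ∫ x in Ioi (0 : ℝ), ∫ c in Ioc a (a + 1), (x : ℂ) ^ s / ((x : ℂ) + c) ^ 2 :=
        setIntegral_congr_fun measurableSet_Ioi fun x hx =>
          (integral_Ioc_cpow_div_add_sq hx ha s).symm
    _ = ∫ c in Ioc a (a + 1), ∫ x in Ioi (0 : ℝ), (x : ℂ) ^ s / ((x : ℂ) + c) ^ 2 :=
        integral_integral_swap (integrable_cpow_div_add_sq_prod ha h₁ h₂)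
    _ = ∫ c in Ioc a (a + 1),
          (c : ℂ) ^ (s - 1) * (Complex.Gamma (1 + s) * Complex.Gamma (1 - s)) :=
        setIntegral_congr_fun measurableSet_Ioc fun c hc => by
          rw [integral_cpow_div_add_sq (ha.trans hc.1), integral_cpow_div_one_add_sq h₁ h₂]
    _ = ((a + 1) ^ s - a ^ s) / s * (s * Complex.Gamma s * Complex.Gamma (1 - s)) := by
        rw [integral_mul_const, ← intervalIntegral.integral_of_le (by linarith),
          integral_cpow (Or.inr ⟨hs₁, ha₀⟩), sub_add_cancel, add_comm (1 : ℂ),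
          Complex.Gamma_add_one s hs]
        push_cast
        ring
    _ = π / Complex.sin (π * s) * ((a + 1) ^ s - a ^ s) := by
        rw [mul_assoc s, Complex.Gamma_mul_Gamma_one_sub]
        field_simp

theorem zeta_stmt_4 (a b : ℝ) (ha : 0 < a) (hb : b ≠ 0) :
    IntegrableOn
      (fun x : ℝ => (x : ℂ) ^ (-(b : ℂ) * Complex.I) / ((x + a) * (x + a + 1)))
      (Set.Ioi (0 : ℝ)) ∧
    ∫ x in Set.Ioi (0 : ℝ), (x : ℂ) ^ (-(b : ℂ) * Complex.I) / ((x + a) * (x + a + 1)) =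
      (Real.pi / (Complex.I * Real.sinh (Real.pi * b))) *
        ((a : ℂ) ^ (-(b : ℂ) * Complex.I) - ((a : ℂ) + 1) ^ (-(b : ℂ) * Complex.I)) := by
  have h₁ : -1 < (-(b : ℂ) * Complex.I).re := by simp
  have h₂ : (-(b : ℂ) * Complex.I).re < 1 := by simp
  have hsin : Complex.sin (π * (-(b : ℂ) * Complex.I)) = -(Complex.I * Real.sinh (π * b)) := by
    rw [show (π : ℂ) * (-(b : ℂ) * Complex.I) = (-(π * b : ℝ) : ℂ) * Complex.I by push_cast; ring,
      Complex.sin_mul_I, Complex.sinh_neg, Complex.ofReal_sinh]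
    ring
  refine ⟨integrableOn_cpow_div_add_mul_add_one ha h₁ h₂, ?_⟩
  rw [integral_cpow_div_add_mul_add_one ha (by simpa using hb) h₁ h₂, hsin, div_neg]
  ring
end

section
/- Let x > 0 be a real number. Then the series Σ_{n=0}^∞ 1/((2n + x + 1)(2n + x + 2)) converges and its sum equals (1/2)·(ψ(x/2 + 1) − ψ((x+1)/2)), where ψ denotes the digamma function ψ(t) = Γ'(t)/Γ(t) of the real Gamma function Γ. -/
open Filter Set

/-- The digamma function ψ(t) = Γ'(t)/Γ(t) of the real Gamma function. -/
noncomputable def digamma (t : ℝ) : ℝ := deriv Real.Gamma t / Real.Gamma t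

/-!
The terms telescope: `1 / ((2n + x + 1)(2n + x + 2)) = (1/2) (1/(a + n) - 1/(b + n))` with
`a = (x + 1)/2` and `b = a + 1/2`. Iterating `ψ(t + 1) = ψ(t) + 1/t` writes the partial sums of
`∑ (1/(a + k) - 1/(b + k))` as `ψ(b) - ψ(a) - (ψ(b + N) - ψ(a + N))`, and the error tends to zero
because `ψ` is monotone (`log ∘ Γ` is convex on `(0, ∞)`) while
`ψ(a + N + m) - ψ(a + N) = ∑_{k<m} 1/(a + N + k)` tends to zero.
-/

open Real Topology

lemma ne_neg_natCast_of_pos {t : ℝ} (ht : 0 < t) (m : ℕ) : t ≠ -m :=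
  ((neg_nonpos.mpr m.cast_nonneg).trans_lt ht).ne'

lemma digamma_eq_deriv_log_Gamma {t : ℝ} (ht : ∀ m : ℕ, t ≠ -m) :
    digamma t = deriv (log ∘ Gamma) t := by
  rw [Function.comp_def, deriv.log (differentiableAt_Gamma ht) (Gamma_ne_zero ht), digamma]

lemma digamma_add_one {t : ℝ} (ht : ∀ m : ℕ, t ≠ -m) : digamma (t + 1) = digamma t + 1 / t := by
  have ht0 : t ≠ 0 := by simpa using ht 0
  have hderiv : deriv Gamma (t + 1) = Gamma t + t * deriv Gamma t := by
    have hGamma : (fun s => Gamma (s + 1)) =ᶠ[𝓝 t] fun s => s * Gamma s := by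
      filter_upwards [eventually_ne_nhds ht0] with s hs using Gamma_add_one hs
    rw [← deriv_comp_add_const, hGamma.deriv_eq,
      deriv_fun_mul differentiableAt_fun_id (differentiableAt_Gamma ht), deriv_id'', one_mul]
  rw [digamma, digamma, hderiv, Gamma_add_one ht0]
  field_simp [Gamma_ne_zero ht]
  ring

lemma digamma_add_nat {t : ℝ} (ht : ∀ m : ℕ, t ≠ -m) (n : ℕ) :
    digamma (t + n) = digamma t + ∑ k ∈ Finset.range n, 1 / (t + k) := by
  induction n with
  | zero => simp
  | succ n ih =>
    have htn : ∀ m : ℕ, t + n ≠ -m := fun m h => ht (m + n) (by push_cast; linarith)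
    rw [Nat.cast_succ, ← add_assoc, digamma_add_one htn, ih, Finset.sum_range_succ, add_assoc]

lemma digamma_monotoneOn : MonotoneOn digamma (Ioi 0) := by
  have h := convexOn_log_Gamma.monotoneOn_deriv fun t (ht : 0 < t) =>
    (differentiableAt_Gamma (ne_neg_natCast_of_pos ht)).log (Gamma_pos_of_pos ht).ne'
  intro a (ha : 0 < a) b (hb : 0 < b) hab
  rw [digamma_eq_deriv_log_Gamma (ne_neg_natCast_of_pos ha),
    digamma_eq_deriv_log_Gamma (ne_neg_natCast_of_pos hb)]
  exact h ha hb hab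

lemma tendsto_digamma_add_nat_sub {a b : ℝ} (ha : 0 < a) (hab : a ≤ b) :
    Tendsto (fun N : ℕ => digamma (b + N) - digamma (a + N)) atTop (𝓝 0) := by
  obtain ⟨m, hm⟩ := exists_nat_ge (b - a)
  have hpos (N : ℕ) : 0 < a + N := by positivity
  have hlower (N : ℕ) : 0 ≤ digamma (b + N) - digamma (a + N) :=
    sub_nonneg.mpr <| digamma_monotoneOn (hpos N) (show 0 < b + N by linarith [hpos N])
      (by linarith)
  have hupper (N : ℕ) :
      digamma (b + N) - digamma (a + N) ≤ ∑ k ∈ Finset.range m, 1 / (a + N + k) := by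
    have hstep := digamma_add_nat (ne_neg_natCast_of_pos (hpos N)) m
    have hmono : digamma (b + N) ≤ digamma (a + N + m) :=
      digamma_monotoneOn (show 0 < b + N by linarith [hpos N])
        (show 0 < a + N + m by linarith [hpos N]) (by linarith)
    linarith
  have hsum : Tendsto (fun N : ℕ => ∑ k ∈ Finset.range m, 1 / (a + N + k)) atTop (𝓝 0) := by
    simpa using tendsto_finsetSum (Finset.range m) fun (k : ℕ) _ =>
      (tendsto_const_nhds (x := (1 : ℝ))).div_atTop <|
        tendsto_atTop_add_const_right _ (k : ℝ) <|
          tendsto_atTop_add_const_left _ a (tendsto_natCast_atTop_atTop (R := ℝ))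
  exact tendsto_of_tendsto_of_tendsto_of_le_of_le tendsto_const_nhds hsum hlower hupper

theorem hasSum_one_div_add_nat_sub_one_div_add_nat {a b : ℝ} (ha : 0 < a) (hb : 0 < b) :
    HasSum (fun k : ℕ => 1 / (a + k) - 1 / (b + k)) (digamma b - digamma a) := by
  wlog hab : a ≤ b generalizing a b
  · simpa using (this hb ha (le_of_not_ge hab)).neg
  have hnonneg (k : ℕ) : 0 ≤ 1 / (a + k) - 1 / (b + k) :=
    sub_nonneg.mpr <| one_div_le_one_div_of_le (by positivity) (by linarith)
  have hpartial (N : ℕ) : ∑ k ∈ Finset.range N, (1 / (a + k) - 1 / (b + k)) =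
      digamma b - digamma a - (digamma (b + N) - digamma (a + N)) := by
    rw [Finset.sum_sub_distrib, digamma_add_nat (ne_neg_natCast_of_pos ha),
      digamma_add_nat (ne_neg_natCast_of_pos hb)]
    ring
  rw [hasSum_iff_tendsto_nat_of_nonneg hnonneg, funext hpartial]
  simpa using tendsto_const_nhds.sub (tendsto_digamma_add_nat_sub ha hab)

theorem zeta_stmt_5 (x : ℝ) (hx : 0 < x) :
    HasSum (fun n : ℕ => 1 / ((2 * n + x + 1) * (2 * n + x + 2)))
      ((1 / 2) * (digamma (x / 2 + 1) - digamma ((x + 1) / 2))) := by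
  have hterm (n : ℕ) : 1 / ((2 * n + x + 1) * (2 * n + x + 2)) =
      1 / 2 * (1 / ((x + 1) / 2 + n) - 1 / (x / 2 + 1 + n)) := by
    field_simp
    ring
  simpa only [hterm] using (hasSum_one_div_add_nat_sub_one_div_add_nat
    (a := (x + 1) / 2) (b := x / 2 + 1) (by positivity) (by positivity)).mul_left (1 / 2)
end

section
/- Define t(s) = Σ_{p prime} 1/(p^s − 1) for real s > 1. Then lim_{s→∞} 2^s · t(s) = 1, i.e., the function s ↦ 2^s · t(s) tends to 1 as the real variable s tends to +∞. -/
open Filter Set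

/-- The prime sum t(s) = Σ_{p prime} 1/(p^s − 1). -/
noncomputable def primeSum (s : ℝ) : ℝ := ∑' p : Nat.Primes, 1 / (((p : ℕ) : ℝ) ^ s - 1)

/-!
Write `2^s t(s) = Σ_p 2^s / (p^s - 1)`. As `s → ∞` the term of `p = 2` tends to `1` and every
other term tends to `0`, while for `s ≥ 2` all terms are bounded by `8 / p^2`, which is summable
over the primes. Tannery's theorem (dominated convergence for series) gives the limit `1`.
-/

open Topology

namespace Real

theorem tendsto_rpow_div_rpow_sub_one {b : ℝ} (hb : 1 < b) :
    Tendsto (fun s : ℝ => b ^ s / (b ^ s - 1)) atTop (𝓝 1) := by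
  have hinv : Tendsto (fun s : ℝ => b⁻¹ ^ s) atTop (𝓝 0) :=
    tendsto_rpow_atTop_of_base_lt_one _ (by linarith [inv_pos.2 (zero_lt_one.trans hb)])
      (inv_lt_one_of_one_lt₀ hb)
  have hlim : Tendsto (fun s : ℝ => 1 / (1 - b⁻¹ ^ s)) atTop (𝓝 (1 / (1 - 0))) :=
    tendsto_const_nhds.div (tendsto_const_nhds.sub hinv) (by norm_num)
  rw [sub_zero, div_one] at hlim
  refine hlim.congr fun s => ?_
  rw [inv_rpow (by linarith)]
  field_simp

theorem tendsto_rpow_div_rpow_sub_one_of_le {a b : ℝ} (ha : 0 ≤ a) (hab : a ≤ b) (hb : 1 < b) :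
    Tendsto (fun s : ℝ => a ^ s / (b ^ s - 1)) atTop (𝓝 (if a = b then 1 else 0)) := by
  rcases hab.eq_or_lt with rfl | hlt
  · simpa using tendsto_rpow_div_rpow_sub_one hb
  have hratio : Tendsto (fun s : ℝ => (a / b) ^ s) atTop (𝓝 0) :=
    tendsto_rpow_atTop_of_base_lt_one _ (by linarith [div_nonneg ha (by linarith : 0 ≤ b)])
      ((div_lt_one (by linarith)).2 hlt)
  have hprod := hratio.mul (tendsto_rpow_div_rpow_sub_one hb)
  rw [zero_mul] at hprod
  rw [if_neg hlt.ne]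
  refine hprod.congr fun s => ?_
  rw [div_rpow ha (by linarith)]
  field_simp

theorem abs_rpow_div_rpow_sub_one_le {a b s : ℝ} (ha : 0 ≤ a) (hab : a ≤ b) (hb : 2 ≤ b)
    (hs : 2 ≤ s) : |a ^ s / (b ^ s - 1)| ≤ 2 * (a / b) ^ (2 : ℝ) := by
  have hbs : b ≤ b ^ s := self_le_rpow_of_one_le (by linarith) (by linarith)
  have has : 0 ≤ a ^ s := rpow_nonneg ha s
  rw [abs_of_nonneg (div_nonneg has (by linarith))]
  calc a ^ s / (b ^ s - 1) ≤ 2 * (a ^ s / b ^ s) := by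
        rw [← mul_div_assoc, div_le_div_iff₀ (by linarith) (by linarith)]
        nlinarith
    _ = 2 * (a / b) ^ s := by rw [div_rpow ha (by linarith)]
    _ ≤ 2 * (a / b) ^ (2 : ℝ) := by
        gcongr 2 * ?_
        exact rpow_le_rpow_of_exponent_ge' (by positivity) ((div_le_one (by linarith)).2 hab)
          zero_le_two hs

end Real

namespace Nat.Primes

theorem summable_div_rpow {a r : ℝ} (ha : 0 ≤ a) (hr : 1 < r) :
    Summable fun p : Nat.Primes => (a / p) ^ r :=
  ((summable_rpow.mpr (neg_lt_neg hr)).mul_left (a ^ r)).congr fun p => by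
    rw [Real.div_rpow ha p.val.cast_nonneg, Real.rpow_neg p.val.cast_nonneg, div_eq_mul_inv]

theorem tsum_ite_two_eq_cast : (∑' p : Nat.Primes, if (2 : ℝ) = p then 1 else 0 : ℝ) = 1 := by
  obtain ⟨two, htwo⟩ : ∃ q : Nat.Primes, (q : ℕ) = 2 := ⟨⟨2, Nat.prime_two⟩, rfl⟩
  rw [tsum_eq_single two fun p hp => if_neg ?_]
  · simp [htwo]
  · contrapose hp
    exact coe_nat_injective (htwo.trans (mod_cast hp)).symm

end Nat.Primes

theorem two_rpow_mul_primeSum (s : ℝ) :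
    2 ^ s * primeSum s = ∑' p : Nat.Primes, 2 ^ s / (((p : ℕ) : ℝ) ^ s - 1) := by
  simp only [primeSum, ← tsum_mul_left, mul_one_div]

theorem zeta_stmt_10 :
    Tendsto (fun s : ℝ => (2 : ℝ) ^ s * primeSum s) atTop (nhds 1) := by
  have two_le (p : Nat.Primes) : (2 : ℝ) ≤ p := mod_cast p.prop.two_le
  have hlim := tendsto_tsum_of_dominated_convergence
    ((Nat.Primes.summable_div_rpow zero_le_two one_lt_two).mul_left 2)
    (fun p => Real.tendsto_rpow_div_rpow_sub_one_of_le zero_le_two (two_le p)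
      (one_lt_two.trans_le (two_le p)))
    ((eventually_ge_atTop 2).mono fun s hs p =>
      Real.abs_rpow_div_rpow_sub_one_le zero_le_two (two_le p) (two_le p) hs)
  rw [Nat.Primes.tsum_ite_two_eq_cast] at hlim
  simpa only [two_rpow_mul_primeSum] using hlim
end

section
/- Let k be a nonzero integer and set s = 1 + 2πik/log 2 (a complex number on the line Re(s) = 1). Then the alternating zeta (Dirichlet eta) series vanishes at s in the sense of convergence of partial sums: lim_{N→∞} Σ_{n=1}^{N} (−1)^(n−1) · n^(−s) = 0. -/
/-! Write `a n = (n + 1) ^ (-s)`. Since `2 ^ (1 - s) = 1`, the odd-indexed terms satisfy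
`2 * a (2 * m + 1) = a m`, so the even partial sums of the alternating series are the block sums
`∑_{N ≤ n < 2N} a n`. By the mean value theorem each `a n` is `∫_n^{n+1} x ^ (-s) dx` up to
`O(n⁻²)`, so a block sum is `((2N) ^ (1 - s) - N ^ (1 - s)) / (1 - s) + O(1 / N)`, and this main
term vanishes, once more because `2 ^ (1 - s) = 1`. -/

open Filter Set Topology

theorem Filter.Tendsto.of_even_odd {α : Type*} {u : ℕ → α} {l : Filter α}
    (he : Tendsto (fun n => u (2 * n)) atTop l) (ho : Tendsto (fun n => u (2 * n + 1)) atTop l) :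
    Tendsto u atTop l := by
  intro t ht
  obtain ⟨N₁, hN₁⟩ := eventually_atTop.mp (he ht)
  obtain ⟨N₂, hN₂⟩ := eventually_atTop.mp (ho ht)
  refine eventually_atTop.mpr ⟨2 * (N₁ + N₂) + 1, fun n hn => ?_⟩
  obtain ⟨m, rfl | rfl⟩ := Nat.even_or_odd' n
  · exact hN₁ m (by omega)
  · exact hN₂ m (by omega)

theorem Finset.sum_range_two_mul_neg_one_pow_mul {R : Type*} [CommRing R] (a : ℕ → R) (N : ℕ) :
    ∑ n ∈ Finset.range (2 * N), (-1) ^ n * a n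
      = ∑ n ∈ Finset.range (2 * N), a n - 2 * ∑ m ∈ Finset.range N, a (2 * m + 1) := by
  induction N with
  | zero => simp
  | succ N ih =>
    rw [show 2 * (N + 1) = 2 * N + 1 + 1 by ring]
    simp only [Finset.sum_range_succ, ih, pow_succ, pow_mul]
    ring

theorem norm_sub_sub_smul_le_of_hasDerivWithinAt {E : Type*} [NormedAddCommGroup E]
    [NormedSpace ℝ E] {f g f' : ℝ → E} {a b C : ℝ} (hab : a ≤ b)
    (hg : ∀ x ∈ Icc a b, HasDerivWithinAt g (f x) (Icc a b) x)
    (hf : ∀ x ∈ Icc a b, HasDerivWithinAt f (f' x) (Icc a b) x)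
    (hC : ∀ x ∈ Icc a b, ‖f' x‖ ≤ C) :
    ‖g b - g a - (b - a) • f b‖ ≤ C * (b - a) ^ 2 := by
  have hb : b ∈ Icc a b := right_mem_Icc.mpr hab
  have ha : a ∈ Icc a b := left_mem_Icc.mpr hab
  have hf_near : ∀ x ∈ Icc a b, ‖f x - f b‖ ≤ C * (b - a) := fun x hx => calc
    ‖f x - f b‖ ≤ C * ‖x - b‖ :=
      (convex_Icc a b).norm_image_sub_le_of_norm_hasDerivWithin_le hf hC hb hx
    _ ≤ C * (b - a) := by
      have hC0 : 0 ≤ C := (norm_nonneg _).trans (hC a ha)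
      gcongr
      rw [Real.norm_eq_abs, abs_of_nonpos (by linarith [hx.2])]
      linarith [hx.1]
  have hφ : ∀ x ∈ Icc a b,
      HasDerivWithinAt (fun y => g y - y • f b) (f x - f b) (Icc a b) x := fun x hx =>
    (hg x hx).sub (by simpa using (hasDerivWithinAt_id x (Icc a b)).smul_const (f b))
  have := (convex_Icc a b).norm_image_sub_le_of_norm_hasDerivWithin_le hφ hf_near ha hb
  rw [Real.norm_eq_abs, abs_of_nonneg (sub_nonneg.mpr hab)] at this
  calc ‖g b - g a - (b - a) • f b‖ = ‖g b - b • f b - (g a - a • f b)‖ := by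
        rw [sub_smul]; congr 1; abel
    _ ≤ C * (b - a) * (b - a) := this
    _ = C * (b - a) ^ 2 := by ring

namespace Complex

theorem norm_ofReal_add_one_cpow_sub_sub_le {s : ℂ} (hs0 : s ≠ 0) (hs1 : s ≠ 1)
    (hs : -1 ≤ s.re) {x : ℝ} (hx : 0 < x) :
    ‖((x : ℂ) + 1) ^ (-s) - (((x : ℂ) + 1) ^ (1 - s) - (x : ℂ) ^ (1 - s)) / (1 - s)‖
      ≤ ‖s‖ * x ^ (-(s.re + 1)) := by
  have hpos : ∀ y ∈ Icc x (x + 1), 0 < y := fun y hy => hx.trans_le hy.1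
  have hg : ∀ y ∈ Icc x (x + 1), HasDerivWithinAt (fun t : ℝ => (t : ℂ) ^ (1 - s) / (1 - s))
      ((y : ℂ) ^ (-s)) (Icc x (x + 1)) y := fun y hy => by
    have := hasDerivAt_ofReal_cpow_const' (hpos y hy).ne' (r := -s) (by simpa using hs1)
    rw [neg_add_eq_sub] at this
    exact this.hasDerivWithinAt
  have hf : ∀ y ∈ Icc x (x + 1), HasDerivWithinAt (fun t : ℝ => (t : ℂ) ^ (-s))
      (-s * (y : ℂ) ^ (-s - 1)) (Icc x (x + 1)) y := fun y hy =>
    (hasDerivAt_ofReal_cpow_const (hpos y hy).ne' (neg_ne_zero.mpr hs0)).hasDerivWithinAt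
  have hC : ∀ y ∈ Icc x (x + 1), ‖-s * (y : ℂ) ^ (-s - 1)‖ ≤ ‖s‖ * x ^ (-(s.re + 1)) := by
    intro y hy
    have hre : (-s - 1).re = -(s.re + 1) := by simp only [sub_re, neg_re, one_re]; ring
    rw [norm_mul, norm_neg, norm_cpow_eq_rpow_re_of_pos (hpos y hy), hre]
    exact mul_le_mul_of_nonneg_left (Real.rpow_le_rpow_of_nonpos hx hy.1 (by linarith))
      (norm_nonneg s)
  have := norm_sub_sub_smul_le_of_hasDerivWithinAt (by linarith) hg hf hC
  rw [add_sub_cancel_left, one_smul, one_pow, mul_one] at this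
  refine (le_of_eq ?_).trans this
  rw [← norm_neg]
  congr 1
  push_cast
  ring

theorem norm_sum_Ico_cpow_sub_le {s : ℂ} (hs0 : s ≠ 0) (hs1 : s ≠ 1) (hs : -1 ≤ s.re)
    {N : ℕ} (hN : 0 < N) :
    ‖∑ n ∈ Finset.Ico N (2 * N), ((n : ℂ) + 1) ^ (-s)
        - (((2 * N : ℕ) : ℂ) ^ (1 - s) - (N : ℂ) ^ (1 - s)) / (1 - s)‖
      ≤ ‖s‖ * (N : ℝ) ^ (-s.re) := by
  have hN' : (0 : ℝ) < N := Nat.cast_pos.mpr hN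
  have htelescope :
      ∑ n ∈ Finset.Ico N (2 * N), (((n : ℂ) + 1) ^ (1 - s) - (n : ℂ) ^ (1 - s)) / (1 - s)
        = (((2 * N : ℕ) : ℂ) ^ (1 - s) - (N : ℂ) ^ (1 - s)) / (1 - s) := by
    simpa only [Nat.cast_add, Nat.cast_one, sub_div] using
      Finset.sum_Ico_sub (fun n : ℕ => (n : ℂ) ^ (1 - s) / (1 - s)) (by omega : N ≤ 2 * N)
  rw [← htelescope, ← Finset.sum_sub_distrib]
  calc _ ≤ ∑ _n ∈ Finset.Ico N (2 * N), ‖s‖ * (N : ℝ) ^ (-(s.re + 1)) := by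
        refine norm_sum_le_of_le _ fun n hn => ?_
        have hn := (Finset.mem_Ico.mp hn).1
        have hn' : (N : ℝ) ≤ n := Nat.cast_le.mpr hn
        calc _ ≤ ‖s‖ * (n : ℝ) ^ (-(s.re + 1)) := by
              simpa only [ofReal_natCast] using
                norm_ofReal_add_one_cpow_sub_sub_le hs0 hs1 hs (x := n) (hN'.trans_le hn')
          _ ≤ ‖s‖ * (N : ℝ) ^ (-(s.re + 1)) :=
              mul_le_mul_of_nonneg_left
                (Real.rpow_le_rpow_of_nonpos hN' hn' (by linarith)) (norm_nonneg s)
    _ = ‖s‖ * (N : ℝ) ^ (-s.re) := by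
        rw [Finset.sum_const, Nat.card_Ico, show 2 * N - N = N by omega, nsmul_eq_mul,
          show -(s.re + 1) = -s.re - 1 by ring, Real.rpow_sub_one hN'.ne']
        field_simp

theorem ne_zero_of_two_cpow_one_sub_eq_one {s : ℂ} (h : (2 : ℂ) ^ (1 - s) = 1) : s ≠ 0 := by
  rintro rfl
  norm_num at h

theorem re_eq_one_of_two_cpow_one_sub_eq_one {s : ℂ} (h : (2 : ℂ) ^ (1 - s) = 1) : s.re = 1 := by
  have hnorm := congrArg norm h
  rw [← Nat.cast_ofNat, norm_natCast_cpow_of_pos two_pos, norm_one, Nat.cast_ofNat,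
    ← Real.rpow_zero 2, Real.rpow_right_inj two_pos (by norm_num)] at hnorm
  simp only [sub_re, one_re] at hnorm
  linarith

theorem tendsto_natCast_add_one_cpow_neg {s : ℂ} (hs : 0 < s.re) :
    Tendsto (fun n : ℕ => ((n : ℂ) + 1) ^ (-s)) atTop (𝓝 0) := by
  refine squeeze_zero_norm (a := fun n : ℕ => ((n + 1 : ℕ) : ℝ) ^ (-s.re)) (fun n => ?_) ?_
  · rw [← Nat.cast_add_one, norm_natCast_cpow_of_pos n.succ_pos, neg_re]
  · exact (tendsto_rpow_neg_atTop hs).comp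
      (tendsto_natCast_atTop_atTop.comp (tendsto_add_atTop_nat 1))

theorem tendsto_sum_Ico_two_mul_cpow_of_two_cpow_eq_one {s : ℂ} (hs1 : s ≠ 1)
    (h2 : (2 : ℂ) ^ (1 - s) = 1) :
    Tendsto (fun N : ℕ => ∑ n ∈ Finset.Ico N (2 * N), ((n : ℂ) + 1) ^ (-s)) atTop (𝓝 0) := by
  have hre := re_eq_one_of_two_cpow_one_sub_eq_one h2
  have hdouble : ∀ N : ℕ, ((2 * N : ℕ) : ℂ) ^ (1 - s) = (N : ℂ) ^ (1 - s) := fun N => by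
    rw [Nat.cast_mul, natCast_mul_natCast_cpow, Nat.cast_ofNat, h2, one_mul]
  refine squeeze_zero_norm' (a := fun N : ℕ => ‖s‖ * (N : ℝ) ^ (-s.re)) ?_ ?_
  · filter_upwards [eventually_gt_atTop 0] with N hN
    have := norm_sum_Ico_cpow_sub_le (ne_zero_of_two_cpow_one_sub_eq_one h2) hs1 (by linarith) hN
    rwa [hdouble, sub_self, zero_div, sub_zero] at this
  · simpa using ((tendsto_rpow_neg_atTop (by linarith)).comp
      tendsto_natCast_atTop_atTop).const_mul ‖s‖

theorem tendsto_sum_range_neg_one_pow_mul_cpow_of_two_cpow_eq_one {s : ℂ} (hs1 : s ≠ 1)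
    (h2 : (2 : ℂ) ^ (1 - s) = 1) :
    Tendsto (fun N : ℕ => ∑ n ∈ Finset.range N, (-1 : ℂ) ^ n * ((n : ℂ) + 1) ^ (-s))
      atTop (𝓝 0) := by
  set a : ℕ → ℂ := fun n => ((n : ℂ) + 1) ^ (-s) with ha
  have htwo : (2 : ℂ) * 2 ^ (-s) = 1 := by
    rw [← h2, sub_eq_add_neg, cpow_add _ _ two_ne_zero, cpow_one]
  have hodd : ∀ m : ℕ, 2 * a (2 * m + 1) = a m := fun m => by
    have hcast : ((2 * m + 1 : ℕ) : ℂ) + 1 = ((2 : ℕ) : ℂ) * ((m + 1 : ℕ) : ℂ) := by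
      push_cast; ring
    simp only [ha]
    rw [hcast, natCast_mul_natCast_cpow, ← mul_assoc, Nat.cast_ofNat, htwo, one_mul,
      Nat.cast_add_one]
  have heven : ∀ N : ℕ, ∑ n ∈ Finset.range (2 * N), (-1 : ℂ) ^ n * a n
      = ∑ n ∈ Finset.Ico N (2 * N), a n := fun N => by
    rw [Finset.sum_range_two_mul_neg_one_pow_mul, Finset.mul_sum, Finset.sum_congr rfl
      fun m _ => hodd m, Finset.sum_Ico_eq_sub _ (by omega)]
  have he := (tendsto_sum_Ico_two_mul_cpow_of_two_cpow_eq_one hs1 h2).congr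
    fun N => (heven N).symm
  have ha0 := (tendsto_natCast_add_one_cpow_neg (s := s)
    (by rw [re_eq_one_of_two_cpow_one_sub_eq_one h2]; exact one_pos)).comp
    (tendsto_atTop_mono (fun n => Nat.le_mul_of_pos_left n two_pos) tendsto_id)
  refine Tendsto.of_even_odd he ?_
  simpa [Finset.sum_range_succ, pow_mul] using he.add ha0

end Complex

theorem zeta_stmt_13 (k : ℤ) (hk : k ≠ 0) :
    Tendsto
      (fun N : ℕ => ∑ n ∈ Finset.range N,
        (-1 : ℂ) ^ n * ((n : ℂ) + 1) ^
          (-(1 + 2 * Real.pi * Complex.I * k / Real.log 2)))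
      atTop (nhds 0) := by
  have hlog : (Real.log 2 : ℂ) ≠ 0 := Complex.ofReal_ne_zero.mpr (Real.log_pos one_lt_two).ne'
  refine Complex.tendsto_sum_range_neg_one_pow_mul_cpow_of_two_cpow_eq_one ?_ ?_
  · rw [Ne, add_eq_left, div_eq_zero_iff, not_or]
    exact ⟨by simp [hk, Real.pi_ne_zero], hlog⟩
  · rw [Complex.cpow_def_of_ne_zero two_ne_zero, ← Complex.ofReal_ofNat,
      ← Complex.ofReal_log zero_le_two]
    convert Complex.exp_int_mul_two_pi_mul_I (-k) using 2
    field_simp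
    push_cast
    ring
end
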